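/- Suppose the coupling matrices satisfy C_+ = 0, and C_-·Ω_- = 0 and C_-·Ω_+ = 0. Then for every s ∈ ℂ such that s·I_{2n} - A is invertible and s·I_m + (1/2)·C_-·C_-† and s·I_m + (1/2)·C_-^#·C_-⊤ are invertible, the annihilation–creation-form transfer function is block diagonal: G[s] = [[ (s·I_m - (1/2)·C_-·C_-†)·(s·I_m + (1/2)·C_-·C_-†)^{-1}, 0],[0, (s·I_m - (1/2)·C_-^#·C_-⊤)·(s·I_m + (1/2)·C_-^#·C_-⊤)^{-1} ]]; in particular BAE measurements are realized. -/

import Mathlib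

open Matrix Complex

noncomputable section

/-- The doubled-up matrix `Δ(U, V) = [[U, V],[V^#, U^#]]`. -/
def DeltaM {k r : ℕ} (U V : Matrix (Fin k) (Fin r) ℂ) :
    Matrix (Fin k ⊕ Fin k) (Fin r ⊕ Fin r) ℂ :=
  fromBlocks U V (V.map (starRingEnd ℂ)) (U.map (starRingEnd ℂ))

/-- `J_k = diag(I_k, -I_k)`. -/
def Jdg (k : ℕ) : Matrix (Fin k ⊕ Fin k) (Fin k ⊕ Fin k) ℂ :=
  fromBlocks 1 0 0 (-1)

/-- `𝒞♭ = Jₙ · 𝒞† · Jₘ` for `𝒞 = Δ(C₋, C₊)`. -/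
def ACflat {m n : ℕ} (Cm Cp : Matrix (Fin m) (Fin n) ℂ) :
    Matrix (Fin n ⊕ Fin n) (Fin m ⊕ Fin m) ℂ :=
  Jdg n * (DeltaM Cm Cp)ᴴ * Jdg m

/-- `A = -i Jₙ Ω - (1/2) 𝒞♭ 𝒞` in the annihilation–creation form. -/
def ACA {m n : ℕ} (Cm Cp : Matrix (Fin m) (Fin n) ℂ) (Om Op : Matrix (Fin n) (Fin n) ℂ) :
    Matrix (Fin n ⊕ Fin n) (Fin n ⊕ Fin n) ℂ :=
  (-Complex.I) • (Jdg n * DeltaM Om Op) - (1/2 : ℂ) • (ACflat Cm Cp * DeltaM Cm Cp)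

/-- The annihilation–creation-form transfer function
`G[s] = I + 𝒞 (sI - A)⁻¹ B` with `B = -𝒞♭` (identity scattering matrix). -/
def ACG {m n : ℕ} (Cm Cp : Matrix (Fin m) (Fin n) ℂ) (Om Op : Matrix (Fin n) (Fin n) ℂ)
    (s : ℂ) : Matrix (Fin m ⊕ Fin m) (Fin m ⊕ Fin m) ℂ :=
  1 + DeltaM Cm Cp *
    (s • (1 : Matrix (Fin n ⊕ Fin n) (Fin n ⊕ Fin n) ℂ) - ACA Cm Cp Om Op)⁻¹ *
    (-(ACflat Cm Cp))

private lemma inv_comm' {k : ℕ} {A B : Matrix (Fin k) (Fin k) ℂ} (h : IsUnit A)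
    (hc : A * B = B * A) : A⁻¹ * B = B * A⁻¹ := by
  have hd : IsUnit A.det := (Matrix.isUnit_iff_isUnit_det A).mp h
  calc A⁻¹ * B = A⁻¹ * B * (A * A⁻¹) := by rw [Matrix.mul_nonsing_inv _ hd, mul_one]
    _ = A⁻¹ * (B * A) * A⁻¹ := by noncomm_ring
    _ = A⁻¹ * (A * B) * A⁻¹ := by rw [← hc]
    _ = A⁻¹ * A * B * A⁻¹ := by noncomm_ring
    _ = B * A⁻¹ := by rw [Matrix.nonsing_inv_mul _ hd, one_mul]

/-- C₊ = 0, C₋Ω₋ = 0, C₋Ω₊ = 0 ⟹ the annihilation–creation-form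
transfer function is block diagonal with the stated diagonal blocks. -/
theorem stmt15 {m n : ℕ} (Cm Cp : Matrix (Fin m) (Fin n) ℂ)
    (Om Op : Matrix (Fin n) (Fin n) ℂ)
    (hOmHerm : Omᴴ = Om) (hOpSymm : Opᵀ = Op)
    (hCp : Cp = 0) (h1 : Cm * Om = 0) (h2 : Cm * Op = 0)
    (s : ℂ)
    (hs : IsUnit (s • (1 : Matrix (Fin n ⊕ Fin n) (Fin n ⊕ Fin n) ℂ) - ACA Cm Cp Om Op))
    (hs1 : IsUnit (s • (1 : Matrix (Fin m) (Fin m) ℂ) + (1/2 : ℂ) • (Cm * Cmᴴ)))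
    (hs2 : IsUnit (s • (1 : Matrix (Fin m) (Fin m) ℂ)
      + (1/2 : ℂ) • (Cm.map (starRingEnd ℂ) * Cmᵀ))) :
    ACG Cm Cp Om Op s =
      fromBlocks
        ((s • (1 : Matrix (Fin m) (Fin m) ℂ) - (1/2 : ℂ) • (Cm * Cmᴴ)) *
          (s • (1 : Matrix (Fin m) (Fin m) ℂ) + (1/2 : ℂ) • (Cm * Cmᴴ))⁻¹)
        0 0
        ((s • (1 : Matrix (Fin m) (Fin m) ℂ) - (1/2 : ℂ) • (Cm.map (starRingEnd ℂ) * Cmᵀ)) *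
          (s • (1 : Matrix (Fin m) (Fin m) ℂ) + (1/2 : ℂ) • (Cm.map (starRingEnd ℂ) * Cmᵀ))⁻¹) := by
  subst hCp
  set c := starRingEnd ℂ
  set D1 : Matrix (Fin m) (Fin m) ℂ := Cm * Cmᴴ with hD1
  set D2 : Matrix (Fin m) (Fin m) ℂ := Cm.map c * Cmᵀ with hD2
  set P1 : Matrix (Fin m) (Fin m) ℂ := s • 1 + (1/2 : ℂ) • D1 with hP1
  set P2 : Matrix (Fin m) (Fin m) ℂ := s • 1 + (1/2 : ℂ) • D2 with hP2
  set C : Matrix (Fin m ⊕ Fin m) (Fin n ⊕ Fin n) ℂ := DeltaM Cm 0 with hC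
  set K : Matrix (Fin n ⊕ Fin n) (Fin n ⊕ Fin n) ℂ :=
    s • 1 - ACA Cm 0 Om Op with hK
  set P : Matrix (Fin m ⊕ Fin m) (Fin m ⊕ Fin m) ℂ := fromBlocks P1 0 0 P2 with hP
  -- Basic block shapes
  have hCflat : ACflat Cm 0 = fromBlocks Cmᴴ 0 0 Cmᵀ := by
    have : (Cm.map c)ᴴ = Cmᵀ := by
      ext i j; simp [Matrix.conjTranspose_apply, Matrix.map_apply, c]
    simp [ACflat, DeltaM, Jdg, Matrix.fromBlocks_conjTranspose,
      Matrix.fromBlocks_multiply, this]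
    exact this
  have hD : C * ACflat Cm 0 = fromBlocks D1 0 0 D2 := by
    simp [hC, hCflat, DeltaM, Matrix.fromBlocks_multiply, hD1, hD2]
    rfl
  -- 𝒞 · (Jₙ Ω) = 0
  have hCO : C * (Jdg n * DeltaM Om Op) = 0 := by
    have h1' : Cm.map c * Om.map c = 0 := by
      rw [← Matrix.map_mul, h1]; ext i j; simp
    have h2' : Cm.map c * Op.map c = 0 := by
      rw [← Matrix.map_mul, h2]; ext i j; simp
    simp [hC, DeltaM, Jdg, Matrix.fromBlocks_multiply, h1, h2, h1', h2',
      ← Matrix.fromBlocks_zero]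
    exact ⟨h2', h1'⟩
  -- key intertwining relation: 𝒞 K = P 𝒞
  have hCK : C * K = P * C := by
    have e1 : C * ACA Cm 0 Om Op
        = -(1/2 : ℂ) • (fromBlocks D1 0 0 D2 * C) := by
      rw [ACA, Matrix.mul_sub, Matrix.mul_smul, hCO, smul_zero, Matrix.mul_smul,
        zero_sub, ← Matrix.mul_assoc, hD, neg_smul, hC]
    have e2 : P * C = s • C + (1/2 : ℂ) • (fromBlocks D1 0 0 D2 * C) := by
      rw [hP, hP1, hP2]
      have : (fromBlocks (s • 1 + (1/2 : ℂ) • D1) 0 0 (s • 1 + (1/2 : ℂ) • D2)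
          : Matrix (Fin m ⊕ Fin m) (Fin m ⊕ Fin m) ℂ)
          = s • 1 + (1/2 : ℂ) • fromBlocks D1 0 0 D2 := by
        rw [← Matrix.fromBlocks_one, Matrix.fromBlocks_smul, Matrix.fromBlocks_smul,
          Matrix.fromBlocks_add]
        simp
      rw [this, Matrix.add_mul, Matrix.smul_mul, Matrix.smul_mul, Matrix.one_mul]
    rw [hK, Matrix.mul_sub, Matrix.mul_smul, Matrix.mul_one, e1, e2, neg_smul,
      sub_neg_eq_add]
  -- invertibility of P
  have hPunit : IsUnit P := by
    rw [Matrix.isUnit_iff_isUnit_det, hP, Matrix.det_fromBlocks_zero₂₁]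
    exact ((Matrix.isUnit_iff_isUnit_det P1).mp hs1).mul
      ((Matrix.isUnit_iff_isUnit_det P2).mp hs2)
  have hPdet : IsUnit P.det := (Matrix.isUnit_iff_isUnit_det P).mp hPunit
  have hKdet : IsUnit K.det := (Matrix.isUnit_iff_isUnit_det K).mp hs
  -- 𝒞 K⁻¹ = P⁻¹ 𝒞
  have hCKinv : C * K⁻¹ = P⁻¹ * C := by
    calc C * K⁻¹ = P⁻¹ * (P * C) * K⁻¹ := by
          rw [← Matrix.mul_assoc P⁻¹ P C, Matrix.nonsing_inv_mul _ hPdet, Matrix.one_mul]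
      _ = P⁻¹ * (C * K) * K⁻¹ := by rw [hCK]
      _ = P⁻¹ * C * (K * K⁻¹) := by simp only [Matrix.mul_assoc]
      _ = P⁻¹ * C := by rw [Matrix.mul_nonsing_inv _ hKdet, Matrix.mul_one]
  -- inverse of block diagonal P
  have hPinv : P⁻¹ = fromBlocks P1⁻¹ 0 0 P2⁻¹ := by
    apply Matrix.inv_eq_right_inv
    rw [hP, Matrix.fromBlocks_multiply]
    simp [Matrix.mul_nonsing_inv _ ((Matrix.isUnit_iff_isUnit_det P1).mp hs1),
      Matrix.mul_nonsing_inv _ ((Matrix.isUnit_iff_isUnit_det P2).mp hs2),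
      Matrix.fromBlocks_one]
  -- main computation
  have hG : ACG Cm 0 Om Op s = 1 - P⁻¹ * fromBlocks D1 0 0 D2 := by
    rw [ACG, ← hC, ← hK, Matrix.mul_neg, hCKinv, Matrix.mul_assoc, hD,
      ← sub_eq_add_neg]
  rw [hG, hPinv]
  have hblock : (1 : Matrix (Fin m ⊕ Fin m) (Fin m ⊕ Fin m) ℂ)
      - fromBlocks P1⁻¹ 0 0 P2⁻¹ * fromBlocks D1 0 0 D2
      = fromBlocks (1 - P1⁻¹ * D1) 0 0 (1 - P2⁻¹ * D2) := by
    rw [Matrix.fromBlocks_multiply]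
    simp only [Matrix.mul_zero, Matrix.zero_mul, add_zero, zero_add]
    rw [← Matrix.fromBlocks_one, sub_eq_add_neg, Matrix.fromBlocks_neg,
      Matrix.fromBlocks_add]
    simp [sub_eq_add_neg]
  rw [hblock]
  -- identify the diagonal blocks
  have key : ∀ (X : Matrix (Fin m) (Fin m) ℂ),
      IsUnit (s • 1 + (1/2 : ℂ) • X) →
      1 - (s • 1 + (1/2 : ℂ) • X)⁻¹ * X
        = (s • 1 - (1/2 : ℂ) • X) * (s • 1 + (1/2 : ℂ) • X)⁻¹ := by
    intro X hX
    have hcomm : (s • 1 + (1/2 : ℂ) • X) * X = X * (s • 1 + (1/2 : ℂ) • X) := by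
      simp [Matrix.add_mul, Matrix.mul_add, Matrix.smul_mul, Matrix.mul_smul]
    have hic := inv_comm' hX hcomm
    have hXd : IsUnit (s • 1 + (1/2 : ℂ) • X).det :=
      (Matrix.isUnit_iff_isUnit_det _).mp hX
    have : (s • 1 - (1/2 : ℂ) • X) = (s • 1 + (1/2 : ℂ) • X) - X := by
      module
    rw [this, Matrix.sub_mul, Matrix.mul_nonsing_inv _ hXd, ← hic]
  rw [key D1 hs1, key D2 hs2]
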